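/- arXiv:1212.0347 — 5 statements merged into one kernel-verified Lean document; each statement's English description precedes it below -/
import Mathlib

section
/- Let m be an odd positive integer. For every C ∈ R, the number of triples (X,Y,Z) ∈ 𝒯 × 𝒯 × 𝒯 with X + Y + Z = C equals 1 if C ∈ −𝒯 (i.e., −C ∈ 𝒯), and equals 2^m + 1 otherwise. -/
/-!
Write `τ` for the Teichmüller lift `𝔽_q → 𝒯`. Every element of `R` is uniquely `τ a + 2 τ b`, and
since `4 = 0` one has `τ a + τ b = τ (a + b) + 2 τ √(ab)`. Hence, for `C = τ s + 2 τ t`, the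
equation `τ a + τ b + τ c = C` says `a + b + c = s` and `ab + ac + bc = t²`; substituting
`a = u + s`, `b = v + s` turns it into `u² + uv + v² = (s + t)²`. As `m` is odd, `𝔽_q` has no
primitive cube root of unity, so this norm form vanishes only at `0`, and by scaling (every element
of `𝔽_q` is a square) it takes each nonzero value equally often, namely `q + 1` times.
Finally `-C = τ s + 2 τ (s + t)` lies in `𝒯` exactly when `s + t = 0`.
-/

open Polynomial
open scoped Classical

theorem add_two_mul_pow_of_even {R : Type*} [CommRing R] (h4 : (4 : R) = 0) {e : ℕ}
    (he : Even e) (x y : R) : (x + 2 * y) ^ e = x ^ e := by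
  obtain ⟨k, rfl⟩ := he
  rw [← two_mul, pow_mul, pow_mul]
  congr 1
  linear_combination (x * y + y ^ 2) * h4

/-- The reduction map of a Galois ring of characteristic 4 onto its residue field, axiomatised by
what the Teichmüller calculus uses. -/
structure IsGaloisRingResidueMap {R K : Type*} [CommRing R] [Field K] (π : R →+* K) : Prop where
  four_eq_zero : (4 : R) = 0
  surjective : Function.Surjective π
  map_eq_zero_iff (x : R) : π x = 0 ↔ ∃ y, x = 2 * y
  map_eq_zero_of_two_mul_eq_zero (x : R) : 2 * x = 0 → π x = 0

namespace IsGaloisRingResidueMap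

variable {R K : Type*} [CommRing R] [Field K] {π : R →+* K} (hR : IsGaloisRingResidueMap π)
include hR

theorem two_eq_zero : (2 : K) = 0 := by
  rw [← map_ofNat π 2]
  exact (hR.map_eq_zero_iff 2).2 ⟨1, (mul_one 2).symm⟩

theorem map_add_two_mul (x y : R) : π (x + 2 * y) = π x := by
  rw [map_add, map_mul, map_ofNat, hR.two_eq_zero, zero_mul, add_zero]

theorem exists_eq_add_two_mul_of_map_eq {x y : R} (h : π x = π y) : ∃ z, x = y + 2 * z := by
  obtain ⟨z, hz⟩ := (hR.map_eq_zero_iff (x - y)).1 (by rw [map_sub, h, sub_self])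
  exact ⟨z, by linear_combination hz⟩

theorem two_mul_eq_of_map_eq {x y : R} (h : π x = π y) : 2 * x = 2 * y := by
  obtain ⟨z, rfl⟩ := hR.exists_eq_add_two_mul_of_map_eq h
  linear_combination z * hR.four_eq_zero

theorem pow_eq_of_map_eq {e : ℕ} (he : Even e) {x y : R} (h : π x = π y) : x ^ e = y ^ e := by
  obtain ⟨z, rfl⟩ := hR.exists_eq_add_two_mul_of_map_eq h
  exact add_two_mul_pow_of_even hR.four_eq_zero he y z

theorem eq_of_sq_eq_sq {a b : K} (h : a ^ 2 = b ^ 2) : a = b := by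
  have hsq : (a - b) ^ 2 = 0 := by linear_combination h + (b ^ 2 - a * b) * hR.two_eq_zero
  exact sub_eq_zero.1 (pow_eq_zero_iff two_ne_zero |>.1 hsq)

theorem ringChar_eq_two : ringChar K = 2 :=
  ringChar.eq_iff.2 (CharTwo.of_one_ne_zero_of_two_eq_zero one_ne_zero hR.two_eq_zero)

variable [Fintype K]

theorem isSquare (a : K) : IsSquare a :=
  FiniteField.isSquare_of_char_two hR.ringChar_eq_two a

theorem even_card : Even (Fintype.card K) :=
  Nat.even_iff.2 (FiniteField.even_card_iff_char_two.1 hR.ringChar_eq_two)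

noncomputable def teich (a : K) : R :=
  Function.surjInv hR.surjective a ^ Fintype.card K

theorem map_teich (a : K) : π (hR.teich a) = a := by
  rw [teich, map_pow, Function.surjInv_eq hR.surjective, FiniteField.pow_card]

theorem teich_pow_card (a : K) : hR.teich a ^ Fintype.card K = hR.teich a :=
  hR.pow_eq_of_map_eq hR.even_card (by rw [map_teich, Function.surjInv_eq hR.surjective])

theorem teich_map {x : R} (hx : x ^ Fintype.card K = x) : hR.teich (π x) = x :=
  calc hR.teich (π x) = x ^ Fintype.card K :=
        hR.pow_eq_of_map_eq hR.even_card (Function.surjInv_eq _ _)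
    _ = x := hx

theorem pow_card_eq_self_iff {x : R} : x ^ Fintype.card K = x ↔ hR.teich (π x) = x :=
  ⟨hR.teich_map, fun h => h ▸ hR.teich_pow_card (π x)⟩

theorem teich_zero : hR.teich 0 = 0 := by
  simpa using hR.teich_map (zero_pow Fintype.card_ne_zero)

theorem teich_mul (a b : K) : hR.teich (a * b) = hR.teich a * hR.teich b := by
  have h := hR.teich_map (x := hR.teich a * hR.teich b)
    (by rw [mul_pow, teich_pow_card, teich_pow_card])
  rwa [map_mul, map_teich, map_teich] at h

theorem two_mul_teich_add (a b : K) :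
    2 * hR.teich (a + b) = 2 * hR.teich a + 2 * hR.teich b := by
  rw [← mul_add]
  exact hR.two_mul_eq_of_map_eq (by rw [map_add, map_teich, map_teich, map_teich])

theorem two_mul_teich_eq_zero_iff {a : K} : 2 * hR.teich a = 0 ↔ a = 0 := by
  refine ⟨fun h => ?_, fun h => by rw [h, teich_zero, mul_zero]⟩
  simpa [map_teich] using hR.map_eq_zero_of_two_mul_eq_zero _ h

theorem teich_sq_add_teich_sq (a b : K) :
    hR.teich (a ^ 2) + hR.teich (b ^ 2) = hR.teich (a ^ 2 + b ^ 2) + 2 * hR.teich (a * b) := by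
  have hsq (c : K) : hR.teich (c ^ 2) = hR.teich c ^ 2 := by rw [sq, teich_mul, sq]
  have hsum : hR.teich (a ^ 2 + b ^ 2) = (hR.teich a + hR.teich b) ^ 2 := by
    rw [show a ^ 2 + b ^ 2 = (a + b) ^ 2 by linear_combination (-(a * b)) * hR.two_eq_zero, hsq]
    exact hR.pow_eq_of_map_eq even_two (by rw [map_add, map_teich, map_teich, map_teich])
  have hprod : 2 * hR.teich (a * b) = 2 * (hR.teich a * hR.teich b) := by rw [teich_mul]
  rw [hsq, hsq, hsum, hprod]
  linear_combination (-(hR.teich a * hR.teich b)) * hR.four_eq_zero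

theorem teich_add {a b c : K} (hc : c ^ 2 = a * b) :
    hR.teich a + hR.teich b = hR.teich (a + b) + 2 * hR.teich c := by
  obtain ⟨a, rfl⟩ := hR.isSquare a
  obtain ⟨b, rfl⟩ := hR.isSquare b
  obtain rfl : c = a * b := hR.eq_of_sq_eq_sq (by rw [hc]; ring)
  simpa only [sq] using hR.teich_sq_add_teich_sq a b

theorem teich_add_add {a b c d : K} (hd : d ^ 2 = a * b + a * c + b * c) :
    hR.teich a + hR.teich b + hR.teich c = hR.teich (a + b + c) + 2 * hR.teich d := by
  obtain ⟨e, he⟩ := hR.isSquare (a * b)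
  obtain ⟨g, hg⟩ := hR.isSquare ((a + b) * c)
  have hde : d = e + g :=
    hR.eq_of_sq_eq_sq (by linear_combination hd + he + hg - e * g * hR.two_eq_zero)
  rw [hR.teich_add (sq e ▸ he.symm), add_right_comm, hR.teich_add (sq g ▸ hg.symm), hde,
    two_mul_teich_add]
  ring

theorem teich_add_two_mul_teich_injective {a b a' b' : K}
    (h : hR.teich a + 2 * hR.teich b = hR.teich a' + 2 * hR.teich b') : a = a' ∧ b = b' := by
  have ha : a = a' := by
    have h' := congrArg π h
    rwa [hR.map_add_two_mul, hR.map_add_two_mul, map_teich, map_teich] at h'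
  subst ha
  refine ⟨rfl, sub_eq_zero.1 ?_⟩
  have h2 : 2 * (hR.teich b - hR.teich b') = 0 := by linear_combination h
  simpa [map_teich] using hR.map_eq_zero_of_two_mul_eq_zero _ h2

theorem exists_eq_teich_add_two_mul_teich (x : R) : ∃ a b, x = hR.teich a + 2 * hR.teich b := by
  obtain ⟨z, hz⟩ :=
    hR.exists_eq_add_two_mul_of_map_eq (y := hR.teich (π x)) (hR.map_teich _).symm
  exact ⟨π x, π z, by rw [hR.two_mul_eq_of_map_eq (hR.map_teich (π z)), ← hz]⟩

theorem neg_teich_add_two_mul_teich_pow_card_eq_iff (s t : K) :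
    (-(hR.teich s + 2 * hR.teich t)) ^ Fintype.card K = -(hR.teich s + 2 * hR.teich t) ↔
      s + t = 0 := by
  have hneg : -(hR.teich s + 2 * hR.teich t) = hR.teich s + 2 * hR.teich (s + t) := by
    rw [two_mul_teich_add]
    linear_combination (-(hR.teich s + hR.teich t)) * hR.four_eq_zero
  rw [hneg, hR.pow_card_eq_self_iff, hR.map_add_two_mul, map_teich, left_eq_add,
    two_mul_teich_eq_zero_iff]

theorem teich_add_add_eq_iff (a b c s t : K) :
    hR.teich a + hR.teich b + hR.teich c = hR.teich s + 2 * hR.teich t ↔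
      a + b + c = s ∧ a * b + a * c + b * c = t ^ 2 := by
  obtain ⟨d, hd⟩ := hR.isSquare (a * b + a * c + b * c)
  rw [hR.teich_add_add (sq d ▸ hd.symm), hd, ← sq]
  constructor
  · intro h
    obtain ⟨hs, rfl⟩ := hR.teich_add_two_mul_teich_injective h
    exact ⟨hs, rfl⟩
  · rintro ⟨rfl, hdt⟩
    rw [hR.eq_of_sq_eq_sq hdt]

theorem card_teich_triples_eq_card_triples (s t : K) :
    Nat.card {x : R × R × R // x.1 ^ Fintype.card K = x.1 ∧ x.2.1 ^ Fintype.card K = x.2.1 ∧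
        x.2.2 ^ Fintype.card K = x.2.2 ∧ x.1 + x.2.1 + x.2.2 = hR.teich s + 2 * hR.teich t} =
      Nat.card {p : K × K × K // p.1 + p.2.1 + p.2.2 = s ∧
        p.1 * p.2.1 + p.1 * p.2.2 + p.2.1 * p.2.2 = t ^ 2} :=
  Nat.card_congr
    { toFun x := ⟨(π x.1.1, π x.1.2.1, π x.1.2.2), by
        obtain ⟨⟨X, Y, Z⟩, hX, hY, hZ, hsum⟩ := x
        rwa [← hR.teich_add_add_eq_iff, hR.teich_map hX, hR.teich_map hY, hR.teich_map hZ]⟩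
      invFun p := ⟨(hR.teich p.1.1, hR.teich p.1.2.1, hR.teich p.1.2.2), hR.teich_pow_card _,
        hR.teich_pow_card _, hR.teich_pow_card _, (hR.teich_add_add_eq_iff ..).2 p.2⟩
      left_inv x := Subtype.ext (Prod.ext (hR.teich_map x.2.1)
        (Prod.ext (hR.teich_map x.2.2.1) (hR.teich_map x.2.2.2.1)))
      right_inv p := Subtype.ext (by simp only [map_teich]) }

end IsGaloisRingResidueMap

theorem card_triples_eq_card_sq_add_mul_add_sq {K : Type*} [CommRing K] (h2 : (2 : K) = 0)
    (s r : K) :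
    Nat.card {p : K × K × K // p.1 + p.2.1 + p.2.2 = s ∧
        p.1 * p.2.1 + p.1 * p.2.2 + p.2.1 * p.2.2 = r} =
      Nat.card {p : K × K // p.1 ^ 2 + p.1 * p.2 + p.2 ^ 2 = s ^ 2 + r} :=
  Nat.card_congr
    { toFun p := ⟨(p.1.1 + s, p.1.2.1 + s), by
        obtain ⟨⟨a, b, c⟩, rfl, hr⟩ := p
        linear_combination
          hr + (5 * a * b + 3 * a * c + 3 * a ^ 2 + 3 * b * c + 3 * b ^ 2 + c ^ 2) * h2⟩
      invFun p := ⟨(p.1.1 + s, p.1.2 + s, p.1.1 + p.1.2 + s), by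
        obtain ⟨⟨u, v⟩, hN⟩ := p
        exact ⟨by linear_combination (u + v + s) * h2,
          by linear_combination hN + (2 * u * s + u * v + 2 * s * v + 2 * s ^ 2) * h2⟩⟩
      left_inv := by
        rintro ⟨⟨a, b, c⟩, rfl, -⟩
        ext
        · linear_combination (a + b + c) * h2
        · linear_combination (a + b + c) * h2
        · linear_combination (2 * a + 2 * b + c) * h2
      right_inv := by
        rintro ⟨⟨u, v⟩, -⟩
        ext
        · linear_combination s * h2
        · linear_combination s * h2 }

theorem card_sq_add_mul_add_sq_eq_sq_mul {K : Type*} [Field K] {c : K} (hc : c ≠ 0) (v : K) :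
    Nat.card {p : K × K // p.1 ^ 2 + p.1 * p.2 + p.2 ^ 2 = c ^ 2 * v} =
      Nat.card {p : K × K // p.1 ^ 2 + p.1 * p.2 + p.2 ^ 2 = v} := by
  refine Nat.card_congr (Equiv.subtypeEquiv
    ((Equiv.mulLeft₀ c hc).prodCongr (Equiv.mulLeft₀ c hc)) fun p => ?_).symm
  change _ ↔ (c * p.1) ^ 2 + c * p.1 * (c * p.2) + (c * p.2) ^ 2 = c ^ 2 * v
  rw [show (c * p.1) ^ 2 + c * p.1 * (c * p.2) + (c * p.2) ^ 2 =
    c ^ 2 * (p.1 ^ 2 + p.1 * p.2 + p.2 ^ 2) by ring, mul_right_inj' (pow_ne_zero 2 hc)]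

namespace FiniteField

variable {K : Type*} [Field K] [Fintype K] {m : ℕ}

theorem two_eq_zero_of_card_eq_two_pow (hm : m ≠ 0) (hcard : Fintype.card K = 2 ^ m) :
    (2 : K) = 0 := by
  have h := FiniteField.cast_card_eq_zero K
  rw [hcard, Nat.cast_pow, Nat.cast_ofNat] at h
  exact pow_eq_zero_iff hm |>.1 h

theorem sq_add_self_add_one_ne_zero (hm : Odd m) (hcard : Fintype.card K = 2 ^ m) (r : K) :
    r ^ 2 + r + 1 ≠ 0 := by
  intro hr
  have h2 := two_eq_zero_of_card_eq_two_pow hm.pos.ne' hcard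
  have hcube : r ^ 3 = 1 := by linear_combination (r - 1) * hr
  obtain ⟨k, hk⟩ : 3 ∣ 2 ^ m + 1 := by simpa using hm.nat_add_dvd_pow_add_pow 2 1
  have hfrob : r ^ 2 = r := by
    have := FiniteField.pow_card r
    rwa [hcard, pow_eq_pow_mod _ hcube, show 2 ^ m % 3 = 2 by omega] at this
  exact one_ne_zero (by linear_combination hr - hfrob - r * h2 : (1 : K) = 0)

theorem sq_add_mul_add_sq_eq_zero_iff (hm : Odd m) (hcard : Fintype.card K = 2 ^ m) {a b : K} :
    a ^ 2 + a * b + b ^ 2 = 0 ↔ a = 0 ∧ b = 0 := by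
  refine ⟨fun h => ?_, fun ⟨ha, hb⟩ => by simp [ha, hb]⟩
  by_cases hb : b = 0
  · subst hb
    exact ⟨by simpa using h, rfl⟩
  · refine absurd ?_ (sq_add_self_add_one_ne_zero hm hcard (a / b))
    field_simp
    linear_combination h

theorem card_sq_add_mul_add_sq_eq (hm : Odd m) (hcard : Fintype.card K = 2 ^ m) (w : K) :
    Nat.card {p : K × K // p.1 ^ 2 + p.1 * p.2 + p.2 ^ 2 = w} =
      if w = 0 then 1 else Fintype.card K + 1 := by
  set F : K → ℕ := fun v => Nat.card {p : K × K // p.1 ^ 2 + p.1 * p.2 + p.2 ^ 2 = v}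
  have hzero : F 0 = 1 := Nat.card_eq_one_iff_exists.2
    ⟨⟨(0, 0), by simp⟩, fun ⟨p, hp⟩ => Subtype.ext (Prod.ext_iff.2
      ((sq_add_mul_add_sq_eq_zero_iff hm hcard).1 hp))⟩
  have hunit {v : K} (hv : v ≠ 0) : F v = F 1 := by
    have h2 := two_eq_zero_of_card_eq_two_pow hm.pos.ne' hcard
    obtain ⟨c, rfl⟩ := isSquare_of_char_two
      (ringChar.eq_iff.2 (CharTwo.of_one_ne_zero_of_two_eq_zero one_ne_zero h2)) v
    have hc : c ≠ 0 := by rintro rfl; simp at hv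
    have h := card_sq_add_mul_add_sq_eq_sq_mul hc 1
    rw [mul_one, sq] at h
    exact h
  have htotal : Fintype.card K ^ 2 = 1 + (Fintype.card K - 1) * F 1 :=
    calc Fintype.card K ^ 2 = ∑ v, F v := by
          rw [sq, ← Fintype.card_prod, ← Nat.card_eq_fintype_card, ← Nat.card_sigma,
            Nat.card_congr (Equiv.sigmaFiberEquiv _)]
      _ = F 0 + ∑ v ∈ (Finset.univ : Finset K).erase 0, F 1 := by
          rw [← Finset.add_sum_erase _ _ (Finset.mem_univ (0 : K))]
          exact congrArg _ (Finset.sum_congr rfl fun v hv => hunit (Finset.ne_of_mem_erase hv))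
      _ = 1 + (Fintype.card K - 1) * F 1 := by
          rw [hzero, Finset.sum_const, Finset.card_erase_of_mem (Finset.mem_univ (0 : K)),
            Finset.card_univ, smul_eq_mul]
  have hone : F 1 = Fintype.card K + 1 := by
    obtain ⟨k, hk⟩ := Nat.exists_eq_add_of_le (Fintype.one_lt_card (α := K))
    rw [hk, show 2 + k - 1 = k + 1 by omega] at htotal
    rw [hk]
    exact Nat.eq_of_mul_eq_mul_left k.succ_pos (by nlinarith [htotal])
  split_ifs with hw
  · rw [hw]; exact hzero
  · exact (hunit hw).trans hone

end FiniteField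

namespace IsGaloisRingResidueMap

variable {R K : Type*} [CommRing R] [Field K] {π : R →+* K}

theorem card_teich_triples_sum_eq (hR : IsGaloisRingResidueMap π) {m : ℕ} (hm : Odd m)
    (hcard : Nat.card K = 2 ^ m) (C : R) :
    Nat.card {x : R × R × R // x.1 ^ 2 ^ m = x.1 ∧ x.2.1 ^ 2 ^ m = x.2.1 ∧
        x.2.2 ^ 2 ^ m = x.2.2 ∧ x.1 + x.2.1 + x.2.2 = C} =
      if (-C) ^ 2 ^ m = -C then 1 else 2 ^ m + 1 := by
  have := Nat.finite_of_card_ne_zero (hcard ▸ (pow_pos two_pos m).ne')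
  let := Fintype.ofFinite K
  rw [Nat.card_eq_fintype_card] at hcard
  obtain ⟨s, t, rfl⟩ := hR.exists_eq_teich_add_two_mul_teich C
  rw [← hcard, hR.card_teich_triples_eq_card_triples,
    hR.neg_teich_add_two_mul_teich_pow_card_eq_iff,
    card_triples_eq_card_sq_add_mul_add_sq hR.two_eq_zero,
    FiniteField.card_sq_add_mul_add_sq_eq hm hcard,
    show s ^ 2 + t ^ 2 = (s + t) ^ 2 by linear_combination (-(s * t)) * hR.two_eq_zero,
    pow_eq_zero_iff two_ne_zero]

end IsGaloisRingResidueMap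

theorem Polynomial.exists_eq_C_mul_of_map_eq_zero {R S : Type*} [CommSemiring R] [Semiring S]
    {φ : R →+* S} {a : R} (hker : RingHom.ker φ = Ideal.span {a}) {p : R[X]}
    (h : p.map φ = 0) : ∃ q, p = C a * q := by
  have hp : p ∈ RingHom.ker (mapRingHom φ) := h
  rw [ker_mapRingHom, hker, Ideal.map_span, Set.image_singleton,
    Ideal.mem_span_singleton'] at hp
  obtain ⟨q, rfl⟩ := hp
  exact ⟨q, mul_comm _ _⟩

namespace AdjoinRoot

variable {R S : Type*} [CommRing R] [CommRing S] (φ : R →+* S) (f : R[X])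

theorem map_mk (p : R[X]) : map φ f (f.map φ) dvd_rfl (mk f p) = mk (f.map φ) (p.map φ) := by
  rw [map, lift_mk, ← aeval_eq, aeval_def, eval₂_map]
  rfl

theorem map_surjective (hφ : Function.Surjective φ) :
    Function.Surjective (map φ f (f.map φ) dvd_rfl) := by
  intro y
  obtain ⟨p, rfl⟩ := mk_surjective y
  obtain ⟨p, rfl⟩ := Polynomial.map_surjective φ hφ p
  exact ⟨mk f p, map_mk φ f p⟩

section

variable {φ f} {a : R} (hker : RingHom.ker φ = Ideal.span {a})
include hker

theorem map_eq_zero_iff (hφ : Function.Surjective φ) {x : AdjoinRoot f} :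
    map φ f (f.map φ) dvd_rfl x = 0 ↔ ∃ y, x = of f a * y := by
  obtain ⟨p, rfl⟩ := mk_surjective x
  constructor
  · intro hp
    rw [map_mk, mk_eq_zero] at hp
    obtain ⟨r, hr⟩ := hp
    obtain ⟨r, rfl⟩ := Polynomial.map_surjective φ hφ r
    obtain ⟨q, hq⟩ := exists_eq_C_mul_of_map_eq_zero hker (p := p - f * r)
      (by rw [Polynomial.map_sub, Polynomial.map_mul, hr, sub_self])
    refine ⟨mk f q, ?_⟩
    rw [← mk_C, ← map_mul, ← hq, map_sub, map_mul, mk_self, zero_mul, sub_zero]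
  · rintro ⟨y, hy⟩
    have hφa : φ a = 0 := by rw [← RingHom.mem_ker, hker]; exact Ideal.mem_span_singleton_self a
    rw [hy, map_mul, map_of, hφa, map_zero, zero_mul]

theorem map_eq_zero_of_mul_eq_zero [IsDomain S] (hf : f.map φ ≠ 0)
    (hann : ∀ c, a * c = 0 → φ c = 0) {x : AdjoinRoot f} (hx : of f a * x = 0) :
    map φ f (f.map φ) dvd_rfl x = 0 := by
  have hann' {p : R[X]} (hp : C a * p = 0) : p.map φ = 0 := by
    ext n
    rw [coeff_map, coeff_zero]
    exact hann _ (by simpa using congrArg (coeff · n) hp)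
  obtain ⟨p, rfl⟩ := mk_surjective x
  rw [← mk_C, ← map_mul, mk_eq_zero] at hx
  obtain ⟨r, hr⟩ := hx
  have hφa : φ a = 0 := by rw [← RingHom.mem_ker, hker]; exact Ideal.mem_span_singleton_self a
  have hr0 : r.map φ = 0 := by
    have := congrArg (Polynomial.map φ) hr
    rw [Polynomial.map_mul, Polynomial.map_mul, map_C, hφa, C_0, zero_mul, eq_comm,
      mul_eq_zero] at this
    exact this.resolve_left hf
  obtain ⟨r, rfl⟩ := exists_eq_C_mul_of_map_eq_zero hker hr0
  have hp : (p - f * r).map φ = 0 := hann' (by linear_combination hr)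
  rw [map_mk, mk_eq_zero]
  exact ⟨r.map φ, by rw [← Polynomial.map_mul, ← sub_eq_zero, ← Polynomial.map_sub, hp]⟩

end

theorem natCard_eq_pow_natDegree {F : Type*} [Field F] {g : F[X]} (hg : g ≠ 0) :
    Nat.card (AdjoinRoot g) = Nat.card F ^ g.natDegree := by
  have := (powerBasis hg).finite
  rw [Module.natCard_eq_pow_finrank (K := F), (powerBasis hg).finrank,
    powerBasis_dim]

local notation "ρ" => ZMod.castHom (show (2 : ℕ) ∣ 4 by norm_num) (ZMod 2)

theorem isGaloisRingResidueMap (f : (ZMod 4)[X]) [Fact (Irreducible (f.map ρ))] :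
    IsGaloisRingResidueMap (map ρ f (f.map ρ) dvd_rfl) := by
  have hker : RingHom.ker ρ = Ideal.span {2} := by
    ext c
    rw [RingHom.mem_ker, Ideal.mem_span_singleton']
    revert c
    decide
  exact
    { four_eq_zero := by rw [← map_ofNat (of f) 4, show (4 : ZMod 4) = 0 from rfl, map_zero]
      surjective := map_surjective ρ f (ZMod.castHom_surjective _)
      map_eq_zero_iff x := by
        simpa only [map_ofNat] using map_eq_zero_iff hker (ZMod.castHom_surjective _) (x := x)
      map_eq_zero_of_two_mul_eq_zero x hx :=
        map_eq_zero_of_mul_eq_zero hker (Fact.out : Irreducible (f.map ρ)).ne_zero (by decide)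
          (by rwa [map_ofNat]) }

end AdjoinRoot

/-- Let `m` be an odd positive integer, `R = GR(4,m)` realized as
`(ℤ/4ℤ)[x]/(f)` for a monic degree-`m` polynomial `f` whose reduction mod 2 is irreducible,
and let `𝒯 = {z : z ^ 2^m = z}` be the Teichmüller set.  For every `C ∈ R`, the number of
triples `(X,Y,Z) ∈ 𝒯³` with `X + Y + Z = C` equals `1` if `-C ∈ 𝒯`, and `2^m + 1`
otherwise. -/
theorem statement4 (m : ℕ) (hm : Odd m)
    (f : Polynomial (ZMod 4)) (hmonic : f.Monic) (hdeg : f.natDegree = m)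
    (hirr : Irreducible (f.map (ZMod.castHom (show (2:ℕ) ∣ 4 by norm_num) (ZMod 2))))
    (C : AdjoinRoot f) :
    Nat.card {t : AdjoinRoot f × AdjoinRoot f × AdjoinRoot f //
        t.1 ^ 2 ^ m = t.1 ∧ t.2.1 ^ 2 ^ m = t.2.1 ∧ t.2.2 ^ 2 ^ m = t.2.2 ∧
        t.1 + t.2.1 + t.2.2 = C} =
      if (-C) ^ 2 ^ m = -C then 1 else 2 ^ m + 1 := by
  have := Fact.mk hirr
  refine (AdjoinRoot.isGaloisRingResidueMap f).card_teich_triples_sum_eq hm ?_ C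
  rw [AdjoinRoot.natCard_eq_pow_natDegree hirr.ne_zero, Nat.card_zmod, hmonic.natDegree_map, hdeg]
end

section
/- If b ∈ 𝔽_q with b ≠ 0 and b ≠ 1, and a = b + b^{−1}, then the polynomial z³ + z + a has exactly one root in 𝔽_q. -/
/-!
Since `m` is odd, `3` is prime to `2 ^ m - 1 = |𝔽_q^×|`, so cubing is a bijection of `𝔽_q`; write
`b = c ^ 3`. In characteristic two `z = c + c⁻¹` satisfies `z ^ 3 + z = c ^ 3 + c⁻³ = a`, and
`X ^ 3 + X + a` factors as `(X - z) (X ^ 2 + z X + z ^ 2 + 1)`. Multiplying the quadratic factor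
by `c ^ 2` and substituting `y = c X + 1` turns it into `y ^ 2 + y w + w ^ 2` with `w = (c + 1) ^ 2`.
A root would give `y ^ 3 = w ^ 3`, hence `y = w` and `w = 0`, i.e. `c = 1`, which is excluded.
-/

open Function

theorem Nat.coprime_two_pow_sub_one_three {m : ℕ} (hm : Odd m) : (2 ^ m - 1).Coprime 3 := by
  obtain ⟨k, rfl⟩ := hm
  have h4 : 4 ^ k % 3 = 1 := by rw [Nat.pow_mod]; simp
  have h : (2 ^ (2 * k + 1) - 1) % 3 = 1 := by rw [pow_succ, pow_mul]; norm_num; omega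
  rw [Nat.Coprime, Nat.gcd_comm, Nat.gcd_rec, h]
  rfl

theorem pow_injective_of_coprime_card_sub_one {M₀ : Type*} [GroupWithZero M₀] {n : ℕ}
    (hn : (Nat.card M₀ - 1).Coprime n) (hn0 : n ≠ 0) : Injective fun x : M₀ ↦ x ^ n := by
  intro x y hxy
  simp only at hxy
  rcases eq_or_ne x 0 with rfl | hx
  · rw [zero_pow hn0, eq_comm, pow_eq_zero_iff hn0] at hxy
    exact hxy.symm
  have hy : y ≠ 0 := by
    rintro rfl
    exact hx <| (pow_eq_zero_iff hn0).mp (hxy.trans (zero_pow hn0))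
  rw [← Nat.card_units] at hn
  have h := (powCoprime hn).injective (a₁ := Units.mk0 x hx) (a₂ := Units.mk0 y hy)
    (Units.ext (by simpa using hxy))
  simpa using congrArg Units.val h

theorem eq_zero_of_sq_add_mul_add_sq_eq_zero {R : Type*} [CommRing R] [IsDomain R]
    (hcube : Injective fun x : R ↦ x ^ 3) (h3 : (3 : R) ≠ 0) {y w : R}
    (h : y ^ 2 + y * w + w ^ 2 = 0) : w = 0 := by
  obtain rfl : y = w := hcube <| by linear_combination (y - w) * h
  have h' : 3 * y ^ 2 = 0 := by linear_combination h
  simpa [h3] using h'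

theorem pow_three_add_self_sub_pow_three_add_self {R : Type*} [CommRing R] (x z : R) :
    x ^ 3 + x - (z ^ 3 + z) = (x - z) * (x ^ 2 + x * z + z ^ 2 + 1) := by
  ring

namespace CharTwo

variable {F : Type*} [Field F] [CharP F 2]

theorem add_inv_pow_three_add_add_inv (c : F) :
    (c + c⁻¹) ^ 3 + (c + c⁻¹) = c ^ 3 + (c ^ 3)⁻¹ := by
  rcases eq_or_ne c 0 with rfl | hc
  · simp
  field_simp
  linear_combination 2 * (c ^ 4 + c ^ 2) * two_eq_zero (R := F)

theorem sq_mul_sq_add_mul_add_sq_add_one {c x z : F} (hz : c * z = c ^ 2 + 1) :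
    c ^ 2 * (x ^ 2 + x * z + z ^ 2 + 1) =
      (x * c + 1) ^ 2 + (x * c + 1) * (c + 1) ^ 2 + ((c + 1) ^ 2) ^ 2 := by
  linear_combination (x * c + c * z + c ^ 2 + 1) * hz -
    ((c + 1) * (x * c + 1) + 2 * c * (c ^ 2 + c + 1)) * two_eq_zero (R := F)

theorem pow_three_add_self_eq_iff (hcube : Injective fun x : F ↦ x ^ 3) {c : F} (hc0 : c ≠ 0)
    (hc1 : c ≠ 1) {x : F} : x ^ 3 + x = c ^ 3 + (c ^ 3)⁻¹ ↔ x = c + c⁻¹ := by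
  refine ⟨fun hx ↦ ?_, fun hx ↦ hx ▸ add_inv_pow_three_add_add_inv c⟩
  have hfactor := pow_three_add_self_sub_pow_three_add_self x (c + c⁻¹)
  rw [add_inv_pow_three_add_add_inv, hx, sub_self, eq_comm, mul_eq_zero] at hfactor
  refine hfactor.elim sub_eq_zero.mp fun hquad ↦ absurd ?_ (pow_ne_zero 2 (sub_ne_zero.mpr hc1))
  have hz : c * (c + c⁻¹) = c ^ 2 + 1 := by field_simp
  have h3 : (3 : F) ≠ 0 := by simp [ofNat_eq_mod]
  rw [sub_eq_add]
  refine eq_zero_of_sq_add_mul_add_sq_eq_zero hcube h3 (y := x * c + 1) ?_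
  rw [← sq_mul_sq_add_mul_add_sq_add_one hz, hquad, mul_zero]

end CharTwo

theorem statement9_general (m : ℕ) (hm : Odd m)
    (F : Type*) [Field F] [Fintype F] (hcard : Fintype.card F = 2 ^ m)
    (b : F) (hb0 : b ≠ 0) (hb1 : b ≠ 1) (a : F) (ha : a = b + b⁻¹) :
    Nat.card {z : F // z ^ 3 + z + a = 0} = 1 := by
  have : CharP F 2 := charP_of_card_eq_prime_pow hcard
  have hcube : Injective fun x : F ↦ x ^ 3 := pow_injective_of_coprime_card_sub_one
    (by rw [Nat.card_eq_fintype_card, hcard]; exact Nat.coprime_two_pow_sub_one_three hm)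
    three_ne_zero
  obtain ⟨c, rfl⟩ := Finite.injective_iff_surjective.mp hcube b
  have hc0 : c ≠ 0 := by rintro rfl; simp at hb0
  have hc1 : c ≠ 1 := by rintro rfl; simp at hb1
  simp_rw [CharTwo.add_eq_zero, ha, CharTwo.pow_three_add_self_eq_iff hcube hc0 hc1]
  simp

/-- Let `m` be an odd positive integer, `q = 2^m`, and `F` a finite field
with `q` elements.  If `b ∈ F` with `b ≠ 0`, `b ≠ 1`, and `a = b + b⁻¹`, then the polynomial
`z³ + z + a` has exactly one root in `F`. -/
theorem statement9 (m : ℕ) (hm : Odd m) (hmpos : 0 < m)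
    (F : Type*) [Field F] [Fintype F] (hcard : Fintype.card F = 2 ^ m)
    (b : F) (hb0 : b ≠ 0) (hb1 : b ≠ 1) (a : F) (ha : a = b + b⁻¹) :
    Nat.card {z : F // z ^ 3 + z + a = 0} = 1 :=
  statement9_general m hm F hcard b hb0 hb1 a ha
end

section
/- If b ∈ 𝔽_q with b ≠ 0, b ≠ 1 and tr(b) = 1, and a = b^{−1} + b^{−3}, then the polynomial z³ + z + a has exactly three distinct roots in 𝔽_q. -/
open Finset Polynomial in
lemma statement10_aux (m : ℕ) (hm : Odd m) (F : Type*) [Field F] [Fintype F]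
    [CharP F 2] (hcard : Fintype.card F = 2 ^ m)
    (b : F) (htr : (∑ i ∈ Finset.range m, b ^ 2 ^ i) = 1) :
    ∃ w : F, w ^ 2 + w = 1 + b ^ 2 := by
  classical
  have hmpos : 0 < m := hm.pos
  have h2z : (2 : F) = 0 := CharTwo.two_eq_zero
  have hpow : ∀ x : F, x ^ 2 ^ m = x := fun x => by
    have := FiniteField.pow_card x; rwa [hcard] at this
  -- Frobenius invariance of the trace sum
  have hTsq : ∀ x : F, (∑ i ∈ range m, (x ^ 2) ^ 2 ^ i) = ∑ i ∈ range m, x ^ 2 ^ i := by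
    intro x
    have h1 : ∀ i : ℕ, (x ^ 2) ^ 2 ^ i = x ^ 2 ^ (i + 1) := by
      intro i; rw [← pow_mul, ← pow_succ']
    rw [Finset.sum_congr rfl fun i _ => h1 i]
    have k1 := Finset.sum_range_succ' (fun i => x ^ 2 ^ i) m
    have k2 := Finset.sum_range_succ (fun i => x ^ 2 ^ i) m
    rw [k2, hpow x, pow_zero, pow_one] at k1
    exact (add_right_cancel k1).symm
  -- the trace polynomial
  set P : Polynomial F := ∑ i ∈ range m, X ^ 2 ^ i with hP
  have hPeval : ∀ x : F, P.eval x = ∑ i ∈ range m, x ^ 2 ^ i := by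
    intro x; simp [hP, eval_finset_sum]
  have hPne : P ≠ 0 := by
    intro h
    rw [← hPeval b, h, eval_zero] at htr
    exact one_ne_zero htr.symm
  have hPdeg : P.natDegree ≤ 2 ^ (m - 1) := by
    apply natDegree_sum_le_of_forall_le
    intro i hi
    rw [natDegree_X_pow]
    exact Nat.pow_le_pow_right (by norm_num) (by have := mem_range.mp hi; omega)
  set K : Finset F := P.roots.toFinset with hK
  have hKcard : K.card ≤ 2 ^ (m - 1) :=
    le_trans (Multiset.toFinset_card_le _) (le_trans (card_roots' P) hPdeg)
  set f : F → F := fun x => x ^ 2 + x with hf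
  -- image of f lies in roots of P
  have himage : ∀ x : F, f x ∈ K := by
    intro x
    rw [hK, Multiset.mem_toFinset, mem_roots hPne]
    show P.eval (f x) = 0
    rw [hPeval]
    have expand : ∀ i : ℕ, (x ^ 2 + x) ^ 2 ^ i = (x ^ 2) ^ 2 ^ i + x ^ 2 ^ i :=
      fun i => add_pow_char_pow ..
    calc (∑ i ∈ range m, (x ^ 2 + x) ^ 2 ^ i)
        = ∑ i ∈ range m, ((x ^ 2) ^ 2 ^ i + x ^ 2 ^ i) :=
          Finset.sum_congr rfl fun i _ => expand i
      _ = (∑ i ∈ range m, (x ^ 2) ^ 2 ^ i) + ∑ i ∈ range m, x ^ 2 ^ i :=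
          Finset.sum_add_distrib
      _ = (∑ i ∈ range m, x ^ 2 ^ i) + ∑ i ∈ range m, x ^ 2 ^ i := by rw [hTsq]
      _ = 0 := CharTwo.add_self_eq_zero _
  -- f is (at most) two-to-one
  have hfib : ∀ x y : F, f x = f y → y = x ∨ y = x + 1 := by
    intro x y h
    have hz : (y + x) * (y + x + 1) = 0 := by
      simp only [hf] at h
      linear_combination -h + (x ^ 2 + x + x * y) * h2z
    rcases mul_eq_zero.mp hz with h' | h'
    · left; linear_combination h' - x * h2z
    · right; linear_combination h' - (x + 1) * h2z
  have hcount : Fintype.card F ≤ 2 * (Finset.univ.image f).card := by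
    rw [← Finset.card_univ]
    apply Finset.card_le_mul_card_image
    intro c hc
    obtain ⟨x, -, hx⟩ := Finset.mem_image.mp hc
    have hsub : Finset.univ.filter (fun y => f y = c) ⊆ {x, x + 1} := by
      intro y hy
      have hy' : f y = c := (Finset.mem_filter.mp hy).2
      have : f x = f y := by rw [hx, hy']
      rcases hfib x y this with h' | h' <;> simp [h']
    calc (Finset.univ.filter (fun y => f y = c)).card ≤ ({x, x + 1} : Finset F).card :=
          Finset.card_le_card hsub
      _ ≤ 2 := Finset.card_insert_le _ _ |>.trans (by simp)
  have hIsub : Finset.univ.image f ⊆ K := by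
    intro c hc
    obtain ⟨x, -, hx⟩ := Finset.mem_image.mp hc
    exact hx ▸ himage x
  have hIcard : 2 ^ (m - 1) ≤ (Finset.univ.image f).card := by
    rw [hcard] at hcount
    have hm2 : 2 ^ m = 2 * 2 ^ (m - 1) := by
      rw [← pow_succ']; congr 1; omega
    omega
  have hKI : K = Finset.univ.image f :=
    (Finset.eq_of_subset_of_card_le hIsub (hKcard.trans hIcard)).symm
  -- the trace of 1 + b^2 is zero
  have hT1 : (∑ i ∈ range m, (1 : F) ^ 2 ^ i) = 1 := by
    simp only [one_pow, Finset.sum_const, card_range, nsmul_eq_mul, mul_one]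
    obtain ⟨k, hk⟩ := hm
    rw [hk]; push_cast; rw [h2z]; ring
  have hcK : (1 + b ^ 2 : F) ∈ K := by
    rw [hK, Multiset.mem_toFinset, mem_roots hPne]
    show P.eval (1 + b ^ 2) = 0
    rw [hPeval]
    calc (∑ i ∈ range m, (1 + b ^ 2 : F) ^ 2 ^ i)
        = ∑ i ∈ range m, ((1 : F) ^ 2 ^ i + (b ^ 2) ^ 2 ^ i) :=
          Finset.sum_congr rfl fun i _ => add_pow_char_pow ..
      _ = (∑ i ∈ range m, (1 : F) ^ 2 ^ i) + ∑ i ∈ range m, (b ^ 2) ^ 2 ^ i :=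
          Finset.sum_add_distrib
      _ = 1 + 1 := by rw [hT1, hTsq, htr]
      _ = 0 := by rw [← h2z]; norm_num
  rw [hKI] at hcK
  obtain ⟨w, -, hw⟩ := Finset.mem_image.mp hcK
  exact ⟨w, hw⟩

/-- Let `m` be an odd positive integer, `q = 2^m`, and `F` a finite field
with `q` elements, with absolute trace `tr x = Σ_{i<m} x^(2^i)`.  If `b ∈ F` with `b ≠ 0`,
`b ≠ 1`, `tr b = 1`, and `a = b⁻¹ + b⁻³`, then the polynomial `z³ + z + a` has exactly three
distinct roots in `F`. -/
theorem statement10 (m : ℕ) (hm : Odd m) (hmpos : 0 < m)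
    (F : Type*) [Field F] [Fintype F] (hcard : Fintype.card F = 2 ^ m)
    (b : F) (hb0 : b ≠ 0) (hb1 : b ≠ 1)
    (htr : (∑ i ∈ Finset.range m, b ^ 2 ^ i) = 1)
    (a : F) (ha : a = b⁻¹ + (b ^ 3)⁻¹) :
    Nat.card {z : F // z ^ 3 + z + a = 0} = 3 := by
  -- characteristic 2
  have hp : (ringChar F).Prime := CharP.char_is_prime F (ringChar F)
  have hd : ringChar F ∣ 2 ^ m := by
    rw [← hcard]
    exact (CharP.cast_eq_zero_iff F (ringChar F) _).mp (FiniteField.cast_card_eq_zero F)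
  have hr2 : ringChar F = 2 :=
    (Nat.prime_dvd_prime_iff_eq hp Nat.prime_two).mp (hp.dvd_of_dvd_pow hd)
  haveI : CharP F 2 := hr2 ▸ ringChar.charP F
  have h2z : (2 : F) = 0 := CharTwo.two_eq_zero
  obtain ⟨w, hw⟩ := statement10_aux m hm F hcard b htr
  have htb : b * b⁻¹ = 1 := mul_inv_cancel₀ hb0
  have ha' : a = b⁻¹ + b⁻¹ ^ 3 := by rw [ha, inv_pow]
  -- the factorization
  have hfact : ∀ z : F,
      z ^ 3 + z + a = (z + b⁻¹) * (z + b⁻¹ * w) * (z + b⁻¹ * w + b⁻¹) := by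
    intro z
    rw [ha']
    linear_combination (-(b⁻¹ ^ 2 * z) - b⁻¹ ^ 3) * hw
      + (-(z + b⁻¹) * (b⁻¹ * b + 1)) * htb
      + (-(b⁻¹ * z ^ 2) - b⁻¹ ^ 2 * z - z * b⁻¹ ^ 2 * w - z ^ 2 * b⁻¹ * w) * h2z
  -- basic non-degeneracy facts
  have hbinv : (b⁻¹ : F) ≠ 0 := inv_ne_zero hb0
  have hbsq : b ^ 2 ≠ 1 := by
    intro h
    have h1 : (b + 1) ^ 2 = 0 := by linear_combination h + (b + 1) * h2z
    have h2 : b + 1 = 0 := by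
      exact pow_eq_zero_iff (n := 2) (by norm_num) |>.mp h1
    exact hb1 (by linear_combination h2 - h2z)
  have hw0 : w ≠ 0 := by
    rintro rfl
    exact hbsq (by linear_combination -hw - h2z)
  have hw1 : w ≠ 1 := by
    rintro rfl
    exact hbsq (by linear_combination -hw)
  -- distinct roots
  have d12 : b⁻¹ ≠ b⁻¹ * w := by
    intro h
    exact hw1 (by field_simp at h; exact h.symm)
  have d13 : b⁻¹ ≠ b⁻¹ * w + b⁻¹ := by
    intro h
    apply hw0
    have : b⁻¹ * w = 0 := by linear_combination h + b⁻¹ * w * h2z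
    rcases mul_eq_zero.mp this with h' | h'
    · exact absurd h' hbinv
    · exact h'
  have d23 : b⁻¹ * w ≠ b⁻¹ * w + b⁻¹ := by
    intro h
    exact hbinv (by linear_combination -h)
  -- the root set
  have hS : {z : F | z ^ 3 + z + a = 0} = {b⁻¹, b⁻¹ * w, b⁻¹ * w + b⁻¹} := by
    ext z
    simp only [Set.mem_setOf_eq, Set.mem_insert_iff, Set.mem_singleton_iff]
    rw [hfact z]
    constructor
    · intro h
      rcases mul_eq_zero.mp h with h' | h'
      · rcases mul_eq_zero.mp h' with h'' | h''
        · exact Or.inl (by linear_combination h'' - b⁻¹ * h2z)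
        · exact Or.inr (Or.inl (by linear_combination h'' - b⁻¹ * w * h2z))
      · exact Or.inr (Or.inr (by linear_combination h' - (b⁻¹ * w + b⁻¹) * h2z))
    · rintro (rfl | rfl | rfl)
      · apply mul_eq_zero_of_left; apply mul_eq_zero_of_left
        linear_combination b⁻¹ * h2z
      · apply mul_eq_zero_of_left; apply mul_eq_zero_of_right
        linear_combination b⁻¹ * w * h2z
      · apply mul_eq_zero_of_right
        linear_combination (b⁻¹ * w + b⁻¹) * h2z
  have hcoe : Nat.card {z : F // z ^ 3 + z + a = 0}
      = Set.ncard {z : F | z ^ 3 + z + a = 0} := Nat.card_coe_set_eq _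
  rw [hcoe, hS]
  exact Set.ncard_eq_three.mpr ⟨_, _, _, d12, d13, d23, rfl⟩
end

section
/- Let a ∈ 𝔽_q satisfy: a ≠ 0; a ≠ b + b^{−1} for every b ∈ 𝔽_q ∖ {0,1}; and a ≠ b^{−1} + b^{−3} for every b ∈ 𝔽_q ∖ {0,1} with tr(b) = 1. Then the polynomial z³ + z + a has no root in 𝔽_q (equivalently, z³ + z + a is irreducible over 𝔽_q). -/
open Finset

private lemma sum_range_two_mul' {M : Type*} [AddCommMonoid M] (f : ℕ → M) (n : ℕ) :
    ∑ j ∈ range (2 * n), f j = ∑ i ∈ range n, (f (2 * i) + f (2 * i + 1)) := by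
  induction n with
  | zero => simp
  | succ n ih =>
      rw [Finset.sum_range_succ, ← ih, show 2 * (n + 1) = 2 * n + 1 + 1 by ring,
        Finset.sum_range_succ, Finset.sum_range_succ, add_assoc]

/-- Let `m` be an odd positive integer, `q = 2^m`, and `F` a finite field
with `q` elements, with absolute trace `tr x = Σ_{i<m} x^(2^i)`.  Suppose `a ∈ F` satisfies:
`a ≠ 0`; `a ≠ b + b⁻¹` for every `b ∈ F ∖ {0,1}`; and `a ≠ b⁻¹ + b⁻³` for every
`b ∈ F ∖ {0,1}` with `tr b = 1`.  Then `z³ + z + a` has no root in `F`. -/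
theorem statement11 (m : ℕ) (hm : Odd m) (hmpos : 0 < m)
    (F : Type*) [Field F] [Fintype F] (hcard : Fintype.card F = 2 ^ m)
    (a : F) (ha0 : a ≠ 0)
    (ha1 : ∀ b : F, b ≠ 0 → b ≠ 1 → a ≠ b + b⁻¹)
    (ha3 : ∀ b : F, b ≠ 0 → b ≠ 1 → (∑ i ∈ Finset.range m, b ^ 2 ^ i) = 1 →
      a ≠ b⁻¹ + (b ^ 3)⁻¹) :
    ∀ z : F, z ^ 3 + z + a ≠ 0 := by
  -- characteristic 2
  have hq : ((2 ^ m : ℕ) : F) = 0 := by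
    have := FiniteField.cast_card_eq_zero F; rwa [hcard] at this
  have h2 : (2 : F) = 0 := by
    push_cast at hq
    exact pow_eq_zero_iff hmpos.ne' |>.mp hq
  haveI : CharP F 2 := by
    have hr : ringChar F = 2 := CharP.ringChar_of_prime_eq_zero Nat.prime_two (by exact_mod_cast h2)
    rw [← hr]; exact ringChar.charP F
  have hpc : ∀ x : F, x ^ 2 ^ m = x := by
    intro x; have := FiniteField.pow_card x; rwa [hcard] at this
  -- additivity of trace
  have hTadd : ∀ x y : F, (∑ i ∈ range m, (x + y) ^ 2 ^ i)
      = (∑ i ∈ range m, x ^ 2 ^ i) + (∑ i ∈ range m, y ^ 2 ^ i) := by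
    intro x y
    rw [← Finset.sum_add_distrib]
    exact Finset.sum_congr rfl fun i _ => add_pow_char_pow ..
  -- trace of a square
  have hTsq : ∀ x : F, (∑ i ∈ range m, (x ^ 2) ^ 2 ^ i) = ∑ i ∈ range m, x ^ 2 ^ i := by
    intro x
    have e : ∀ i, (x ^ 2) ^ 2 ^ i = x ^ 2 ^ (i + 1) := by
      intro i; rw [← pow_mul]; congr 1; rw [pow_succ]; ring
    have h1 := Finset.sum_range_succ' (fun i => x ^ 2 ^ i) m
    have h2' := Finset.sum_range_succ (fun i => x ^ 2 ^ i) m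
    simp only [pow_zero, pow_one] at h1
    rw [hpc x] at h2'
    calc (∑ i ∈ range m, (x ^ 2) ^ 2 ^ i) = ∑ i ∈ range m, x ^ 2 ^ (i + 1) :=
          Finset.sum_congr rfl fun i _ => e i
      _ = ∑ i ∈ range m, x ^ 2 ^ i := by linear_combination h2' - h1
  -- half trace: trace-zero elements are in the image of x ↦ x² + x
  have hhalf : ∀ c : F, (∑ i ∈ range m, c ^ 2 ^ i) = 0 → ∃ t : F, t ^ 2 + t = c := by
    intro c hc
    obtain ⟨k, hk⟩ := hm
    refine ⟨∑ i ∈ range (k + 1), c ^ 2 ^ (2 * i), ?_⟩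
    have hsq : (∑ i ∈ range (k + 1), c ^ 2 ^ (2 * i)) ^ 2
        = ∑ i ∈ range (k + 1), c ^ 2 ^ (2 * i + 1) := by
      rw [sum_pow_char]
      exact Finset.sum_congr rfl fun i _ => by rw [← pow_mul, ← pow_succ]
    rw [hsq, ← Finset.sum_add_distrib]
    have : (∑ i ∈ range (k + 1), (c ^ 2 ^ (2 * i + 1) + c ^ 2 ^ (2 * i)))
        = ∑ j ∈ range (2 * (k + 1)), c ^ 2 ^ j := by
      rw [sum_range_two_mul' (fun j => c ^ 2 ^ j) (k + 1)]
      exact Finset.sum_congr rfl fun i _ => add_comm _ _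
    rw [this, show 2 * (k + 1) = m + 1 by omega, Finset.sum_range_succ, hc, hpc, zero_add]
  intro z hz
  have ha : a = z ^ 3 + z := by linear_combination hz + (-(z ^ 3) - z) * h2
  have hz0 : z ≠ 0 := by
    intro h; apply ha0; rw [h] at ha; simpa using ha
  have hz1 : z ≠ 1 := by
    intro h; apply ha0; rw [h] at ha; rw [ha]; linear_combination h2
  -- trace of z⁻¹ is 0 or 1
  have hSor : (∑ i ∈ range m, (z⁻¹) ^ 2 ^ i) = 0 ∨ (∑ i ∈ range m, (z⁻¹) ^ 2 ^ i) = 1 := by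
    have hsq : (∑ i ∈ range m, (z⁻¹) ^ 2 ^ i) ^ 2 = ∑ i ∈ range m, (z⁻¹) ^ 2 ^ i := by
      rw [sum_pow_char]
      calc (∑ i ∈ range m, ((z⁻¹) ^ 2 ^ i) ^ 2) = ∑ i ∈ range m, ((z⁻¹) ^ 2) ^ 2 ^ i :=
            Finset.sum_congr rfl fun i _ => by rw [← pow_mul, ← pow_mul, mul_comm]
        _ = _ := hTsq z⁻¹
    rcases mul_eq_zero.mp (show (∑ i ∈ range m, (z⁻¹) ^ 2 ^ i)
        * ((∑ i ∈ range m, (z⁻¹) ^ 2 ^ i) - 1) = 0 by linear_combination hsq) with h | h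
    · exact Or.inl h
    · exact Or.inr (by linear_combination h)
  rcases hSor with h0 | h1
  · -- trace 0 case: find b with a = b + b⁻¹
    have hzne : z + 1 ≠ 0 := by
      intro h; apply hz1; linear_combination h - h2
    set u := (z + 1)⁻¹ with hu_def
    have hu : (z + 1) * u = 1 := mul_inv_cancel₀ hzne
    have hzi : z * z⁻¹ = 1 := mul_inv_cancel₀ hz0
    have hai : a * a⁻¹ = 1 := mul_inv_cancel₀ ha0
    have haz : a = z * (z + 1) ^ 2 := by linear_combination ha - z ^ 2 * h2
    have hinv : a⁻¹ = z⁻¹ * u ^ 2 := by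
      apply inv_eq_of_mul_eq_one_right
      rw [haz]
      calc z * (z + 1) ^ 2 * (z⁻¹ * u ^ 2) = (z * z⁻¹) * ((z + 1) * u) ^ 2 := by ring
        _ = 1 := by rw [hzi, hu]; ring
    have hpf : a⁻¹ = z⁻¹ + u + u ^ 2 := by
      rw [hinv]
      linear_combination (-(z⁻¹ * (u * (z + 1) + 1)) - u) * hu
        + (-(u ^ 2 * (z + 1) + u ^ 2)) * hzi + (z⁻¹ * u ^ 2 + (2 * z * z⁻¹ * u ^ 2 + z ^ 2 * z⁻¹ * u ^ 2 - z⁻¹ - u - u ^ 2)) * h2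
    have hTa : (∑ i ∈ range m, (a⁻¹) ^ 2 ^ i) = 0 := by
      rw [hpf, hTadd (z⁻¹ + u) (u ^ 2), hTadd z⁻¹ u, h0, hTsq u]
      linear_combination (∑ i ∈ range m, u ^ 2 ^ i) * h2
    have hTa2 : (∑ i ∈ range m, ((a⁻¹) ^ 2) ^ 2 ^ i) = 0 := by rw [hTsq, hTa]
    obtain ⟨t, ht⟩ := hhalf ((a⁻¹) ^ 2) hTa2
    have hb1 : (a * t) ^ 2 + a * (a * t) = 1 := by
      have : (a * t) ^ 2 + a * (a * t) = a ^ 2 * (t ^ 2 + t) := by ring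
      rw [this, ht, ← mul_pow, hai, one_pow]
    have hb0 : a * t ≠ 0 := by
      intro h; rw [h] at hb1; simp at hb1
    have hbne1 : a * t ≠ 1 := by
      intro h; rw [h] at hb1; exact ha0 (by linear_combination hb1)
    have hbi : (a * t) * (a * t)⁻¹ = 1 := mul_inv_cancel₀ hb0
    exact ha1 (a * t) hb0 hbne1
      (by linear_combination (a * t)⁻¹ * hb1 + (-(a * t) - a) * hbi + (-(a * t)) * h2)
  · -- trace 1 case: use b = z⁻¹
    refine ha3 z⁻¹ (inv_ne_zero hz0) (fun h => hz1 (inv_eq_one.mp h)) h1 ?_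
    rw [ha, inv_inv, inv_pow, inv_inv]
    ring
end

section
/- Let m be an odd positive integer, W ∈ 𝒯, and d ∈ 𝔽_q. The number of triples (X,Y,Z) ∈ 𝒯³ satisfying X + Y − Z = W + 2 in R and x³ + y³ + z³ = w³ + d in 𝔽_q equals: 1 if d = 0; 2 if d ∈ M_1; and 0 if d ∈ M_0 ∪ M_3. -/
open Polynomial

/-- The residue field `𝔽_q = R/2R` of the Galois ring `R = (ℤ/4ℤ)[x]/(f)`. -/
abbrev ResField (f : Polynomial (ZMod 4)) : Type :=
  AdjoinRoot f ⧸ (Ideal.span {2} : Ideal (AdjoinRoot f))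

/-- Reduction modulo 2, `μ : R → R/2R`. -/
noncomputable def muRed (f : Polynomial (ZMod 4)) : AdjoinRoot f →+* ResField f :=
  Ideal.Quotient.mk _

/-- The number of roots of `z³ + z + d` in `𝔽_q`. -/
noncomputable def cubicRoots (f : Polynomial (ZMod 4)) (d : ResField f) : ℕ :=
  Nat.card {z : ResField f // z ^ 3 + z + d = 0}

/-!
Write `x, y, z, w` for the residues of `X, Y, Z, W`. Teichmüller elements are fixed by
`A ↦ A^(2^m)`, and `(A + B)^(2^m) = A^(2^m) + B^(2^m) + 2 (AB)^(2^(m-1))` when `4 = 0`; comparing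
`2^m`-th powers of `X + Y = W + Z + 2S` therefore gives `s² = xy - wz` for the carry `S`. Hence
`X + Y - Z = W + 2` iff `x + y - z = w` and `xy - wz = 1`, i.e. `z = x + y - w` and
`(x - w)(y - w) = 1`; the cubic condition then reads `d = u + u⁻¹` with `u = x - w`. So the
solutions correspond to the roots of `u² + du + 1`: one root for `d = 0`, two or none otherwise.

For `d ≠ 0` the quadratic has a root iff `1/d` lies in the image `℘(𝔽_q)` of `x ↦ x² + x`, a
subgroup of index 2 which does not contain `1` since `m` is odd. If `s` is a root of
`z³ + z + d`, then `1/d = ℘(1/(s+1)) + 1/s`, and the other roots of the cubic are the roots of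
`r² + sr + s² + 1`, which exist iff `1 + 1/s ∈ ℘(𝔽_q)`. Hence the quadratic has a root exactly
when the cubic has a unique root; and the cubic does have the root `t + t⁻¹` whenever the
quadratic has a root `u = t³` (cubing is bijective on `𝔽_q` for odd `m`).
-/

lemma Nat.coprime_three_two_pow_sub_one {m : ℕ} (hm : Odd m) : Nat.Coprime 3 (2 ^ m - 1) := by
  obtain ⟨k, rfl⟩ := hm
  rw [Nat.Prime.coprime_iff_not_dvd Nat.prime_three]
  have h1 : 2 ^ (2 * k + 1) % 3 = 2 := by
    rw [pow_succ, pow_mul, Nat.mul_mod, Nat.pow_mod]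
    norm_num
  generalize 2 ^ (2 * k + 1) = N at h1
  omega

section FiniteField

variable {K : Type*} [Field K] [Finite K]

lemma FiniteField.eq_one_of_pow_eq_one {n : ℕ} (hn0 : n ≠ 0) (hn : n.Coprime (Nat.card K - 1))
    {x : K} (h : x ^ n = 1) : x = 1 := by
  have := Fintype.ofFinite K
  have hx : x ≠ 0 := by rintro rfl; simp [hn0] at h
  have hq : x ^ (Nat.card K - 1) = 1 := by
    rw [Nat.card_eq_fintype_card]; exact FiniteField.pow_card_sub_one_eq_one x hx
  have h1 : x ^ n.gcd (Nat.card K - 1) = 1 := pow_gcd_eq_one.mpr ⟨h, hq⟩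
  rwa [hn.gcd_eq_one, pow_one] at h1

lemma FiniteField.pow_injective {n : ℕ} (hn0 : n ≠ 0) (hn : n.Coprime (Nat.card K - 1)) :
    Function.Injective fun x : K => x ^ n := by
  intro x y (h : x ^ n = y ^ n)
  by_cases hy : y = 0
  · subst hy
    exact (pow_eq_zero_iff hn0).mp (h.trans (zero_pow hn0))
  · rw [← div_eq_one_iff_eq hy]
    exact eq_one_of_pow_eq_one hn0 hn (by rw [div_pow, h, div_self (pow_ne_zero n hy)])

lemma FiniteField.pow_surjective {n : ℕ} (hn0 : n ≠ 0) (hn : n.Coprime (Nat.card K - 1)) :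
    Function.Surjective fun x : K => x ^ n :=
  Finite.injective_iff_surjective.mp (pow_injective hn0 hn)

end FiniteField

section CharTwo

variable (K : Type*) [Field K] [CharP K 2]

def artinSchreier : K →+ K where
  toFun x := x ^ 2 + x
  map_zero' := by simp
  map_add' x y := by grind

variable {K}

lemma mem_range_artinSchreier {a : K} : a ∈ (artinSchreier K).range ↔ ∃ x, x ^ 2 + x = a :=
  AddMonoidHom.mem_range

lemma card_ker_artinSchreier : Nat.card (artinSchreier K).ker = 2 := by
  have hker : ((artinSchreier K).ker : Set K) = {0, 1} := by
    ext x
    change x ^ 2 + x = 0 ↔ x = 0 ∨ x = 1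
    rw [show x ^ 2 + x = x * (x - 1) by grind, mul_eq_zero, sub_eq_zero]
  rw [← SetLike.coe_sort_coe, hker, Nat.card_coe_set_eq, Set.ncard_pair zero_ne_one]

lemma index_range_artinSchreier [Finite K] : (artinSchreier K).range.index = 2 := by
  have hK := (artinSchreier K).ker.card_mul_index
  rw [AddSubgroup.index_ker, card_ker_artinSchreier, ← (artinSchreier K).range.card_mul_index,
    mul_comm] at hK
  exact (Nat.eq_of_mul_eq_mul_left Nat.card_pos hK).symm

lemma add_mem_range_artinSchreier_iff [Finite K] {a b : K} :
    a + b ∈ (artinSchreier K).range ↔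
      (a ∈ (artinSchreier K).range ↔ b ∈ (artinSchreier K).range) :=
  AddSubgroup.add_mem_iff_of_index_two index_range_artinSchreier

lemma sq_mem_range_artinSchreier_iff {a : K} :
    a ^ 2 ∈ (artinSchreier K).range ↔ a ∈ (artinSchreier K).range := by
  have h : a ^ 2 = artinSchreier K a + a := by
    change _ = a ^ 2 + a + a
    grind
  rw [h, AddSubgroup.add_mem_cancel_left _ (AddMonoidHom.mem_range.mpr ⟨a, rfl⟩)]

lemma one_notMem_range_artinSchreier [Finite K] {m : ℕ} (hcard : Nat.card K = 2 ^ m)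
    (hm : Odd m) : (1 : K) ∉ (artinSchreier K).range := by
  rw [mem_range_artinSchreier]
  rintro ⟨x, hx⟩
  have hx3 : x ^ 3 = 1 := by grind
  have h3 : Nat.Coprime 3 (Nat.card K - 1) := hcard ▸ Nat.coprime_three_two_pow_sub_one hm
  obtain rfl := FiniteField.eq_one_of_pow_eq_one three_ne_zero h3 hx3
  grind

lemma one_add_mem_range_artinSchreier_iff [Finite K] {m : ℕ} (hcard : Nat.card K = 2 ^ m)
    (hm : Odd m) {a : K} : 1 + a ∈ (artinSchreier K).range ↔ a ∉ (artinSchreier K).range := by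
  have := one_notMem_range_artinSchreier hcard hm
  rw [add_mem_range_artinSchreier_iff]
  tauto

lemma exists_sq_add_mul_add_eq_zero_iff {s : K} (hs : s ≠ 0) (c : K) :
    (∃ x, x ^ 2 + s * x + c = 0) ↔ c / s ^ 2 ∈ (artinSchreier K).range := by
  rw [mem_range_artinSchreier]
  constructor
  · rintro ⟨x, hx⟩
    exact ⟨x / s, by field_simp; grind⟩
  · rintro ⟨y, hy⟩
    exact ⟨s * y, by field_simp at hy; grind⟩

lemma exists_quadratic_root_iff_inv_mem_range {d s : K} (hd : d ≠ 0) (hs : s ^ 3 + s + d = 0) :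
    (∃ u, u ^ 2 + d * u + 1 = 0) ↔ s⁻¹ ∈ (artinSchreier K).range := by
  have hs0 : s ≠ 0 := by rintro rfl; grind
  have hs1 : s + 1 ≠ 0 := by intro h; grind
  have hinv : d⁻¹ = artinSchreier K (s + 1)⁻¹ + s⁻¹ := by
    change _ = (s + 1)⁻¹ ^ 2 + (s + 1)⁻¹ + s⁻¹
    field_simp
    grind
  rw [exists_sq_add_mul_add_eq_zero_iff hd, one_div, ← inv_pow, sq_mem_range_artinSchreier_iff,
    hinv, AddSubgroup.add_mem_cancel_left _ (AddMonoidHom.mem_range.mpr ⟨_, rfl⟩)]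

lemma exists_ne_cubic_root_iff {d s : K} (hd : d ≠ 0) (hs : s ^ 3 + s + d = 0) :
    (∃ r, r ^ 3 + r + d = 0 ∧ r ≠ s) ↔ 1 + s⁻¹ ∈ (artinSchreier K).range := by
  have hs0 : s ≠ 0 := by rintro rfl; grind
  have hfactor (r : K) : r ^ 3 + r + d = (r - s) * (r ^ 2 + s * r + (s ^ 2 + 1)) := by grind
  have hsq : (s ^ 2 + 1) / s ^ 2 = (1 + s⁻¹) ^ 2 := by field_simp; grind
  rw [← sq_mem_range_artinSchreier_iff, ← hsq, ← exists_sq_add_mul_add_eq_zero_iff hs0]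
  constructor
  · rintro ⟨r, hr, hrs⟩
    rw [hfactor, mul_eq_zero] at hr
    exact ⟨r, hr.resolve_left (sub_ne_zero.mpr hrs)⟩
  · rintro ⟨r, hr⟩
    refine ⟨r, by rw [hfactor, hr, mul_zero], ?_⟩
    -- if `s` were a root of the quadratic factor, then `s² + 1 = 0`, so `s = 1` and `d = 0`
    rintro rfl
    grind

lemma exists_cubic_root_of_quadratic_root [Finite K] {m : ℕ} (hcard : Nat.card K = 2 ^ m)
    (hm : Odd m) {d u : K} (hu : u ^ 2 + d * u + 1 = 0) : ∃ s, s ^ 3 + s + d = 0 := by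
  have h3 : Nat.Coprime 3 (Nat.card K - 1) := hcard ▸ Nat.coprime_three_two_pow_sub_one hm
  obtain ⟨t, rfl⟩ := FiniteField.pow_surjective three_ne_zero h3 u
  have ht : t ≠ 0 := by rintro rfl; grind
  -- in characteristic two, `(t + t⁻¹)³ + (t + t⁻¹) = t³ + t⁻³ = d`
  refine ⟨t + t⁻¹, ?_⟩
  field_simp
  grind

lemma exists_quadratic_root_iff_card_cubic_roots_eq_one [Finite K] {m : ℕ}
    (hcard : Nat.card K = 2 ^ m) (hm : Odd m) {d : K} (hd : d ≠ 0) :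
    (∃ u, u ^ 2 + d * u + 1 = 0) ↔ Nat.card {z : K // z ^ 3 + z + d = 0} = 1 := by
  have hunique {s : K} (hs : s ^ 3 + s + d = 0) :
      Nat.card {z : K // z ^ 3 + z + d = 0} = 1 ↔ ¬∃ r, r ^ 3 + r + d = 0 ∧ r ≠ s := by
    rw [Nat.card_eq_one_iff_exists]
    constructor
    · rintro ⟨z, hz⟩ ⟨r, hr, hrs⟩
      exact hrs (congrArg Subtype.val ((hz ⟨r, hr⟩).trans (hz ⟨s, hs⟩).symm))
    · intro h
      exact ⟨⟨s, hs⟩, fun ⟨r, hr⟩ => Subtype.ext (by_contra fun hrs => h ⟨r, hr, hrs⟩)⟩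
  have hroot {s : K} (hs : s ^ 3 + s + d = 0) :
      (∃ u, u ^ 2 + d * u + 1 = 0) ↔ Nat.card {z : K // z ^ 3 + z + d = 0} = 1 := by
    rw [hunique hs, exists_ne_cubic_root_iff hd hs, one_add_mem_range_artinSchreier_iff hcard hm,
      not_not, exists_quadratic_root_iff_inv_mem_range hd hs]
  constructor
  · rintro ⟨u, hu⟩
    obtain ⟨s, hs⟩ := exists_cubic_root_of_quadratic_root hcard hm hu
    exact (hroot hs).mp ⟨u, hu⟩
  · intro h
    obtain ⟨⟨s, hs⟩, -⟩ := Nat.card_eq_one_iff_exists.mp h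
    exact (hroot hs).mpr h

lemma card_quadratic_roots_of_eq_zero : Nat.card {u : K // u ^ 2 + 1 = 0} = 1 := by
  rw [Nat.card_eq_one_iff_exists]
  refine ⟨⟨1, by grind⟩, fun ⟨u, hu⟩ => Subtype.ext ?_⟩
  rw [← sub_eq_zero, ← pow_eq_zero_iff two_ne_zero]
  grind

lemma card_quadratic_roots_of_ne_zero {d u₀ : K} (hd : d ≠ 0) (hu₀ : u₀ ^ 2 + d * u₀ + 1 = 0) :
    Nat.card {u : K // u ^ 2 + d * u + 1 = 0} = 2 := by
  have hroots (u : K) : u ^ 2 + d * u + 1 = 0 ↔ u ∈ ({u₀, u₀ + d} : Set K) := by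
    have : u ^ 2 + d * u + 1 = (u - u₀) * (u - (u₀ + d)) := by grind
    rw [this, mul_eq_zero, sub_eq_zero, sub_eq_zero]
    rfl
  rw [Nat.card_congr (Equiv.subtypeEquivRight hroots), Nat.card_coe_set_eq,
    Set.ncard_pair (by simpa using hd)]

lemma card_cubic_system_eq_card_quadratic_roots (w d : K) :
    Nat.card {s : K × K × K // (s.1 + s.2.1 - s.2.2 = w ∧ s.1 * s.2.1 - w * s.2.2 = 1) ∧
        s.1 ^ 3 + s.2.1 ^ 3 + s.2.2 ^ 3 = w ^ 3 + d} =
      Nat.card {u : K // u ^ 2 + d * u + 1 = 0} := by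
  have hu0 {u : K} (hu : u ^ 2 + d * u + 1 = 0) : u * u⁻¹ = 1 :=
    mul_inv_cancel₀ (by rintro rfl; grind)
  refine Nat.card_congr
    { toFun := fun s => ⟨s.1.1 - w, by obtain ⟨⟨x, y, z⟩, ⟨h₁, h₂⟩, h₃⟩ := s; grind⟩
      invFun := fun u => ⟨(u.1 + w, u.1⁻¹ + w, u.1 + u.1⁻¹ + w), by
        have := hu0 u.2; refine ⟨⟨?_, ?_⟩, ?_⟩ <;> grind⟩
      left_inv := ?_
      right_inv := fun u => by ext; simp }
  rintro ⟨⟨x, y, z⟩, ⟨h₁, h₂⟩, h₃⟩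
  have hy : (x - w)⁻¹ = y - w := inv_eq_of_mul_eq_one_right (by grind)
  ext
  · simp
  · simp [hy]
  · simp [hy]; grind

end CharTwo

section Teichmuller

variable {R : Type*} [CommRing R] {m : ℕ}

local notation "𝔽" => R ⧸ Ideal.span {(2 : R)}
local notation "μ" => Ideal.Quotient.mk (Ideal.span {(2 : R)})

lemma mk_two : μ 2 = 0 :=
  Ideal.Quotient.eq_zero_iff_mem.mpr (Ideal.mem_span_singleton_self 2)

lemma two_eq_zero_quotient : (2 : 𝔽) = 0 := by
  rw [← map_ofNat μ 2, mk_two]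

lemma exists_eq_two_mul_of_mk_eq_zero {a : R} (h : μ a = 0) : ∃ s, a = 2 * s := by
  obtain ⟨s, hs⟩ := Ideal.mem_span_singleton'.mp (Ideal.Quotient.eq_zero_iff_mem.mp h)
  exact ⟨s, by rw [← hs, mul_comm]⟩

lemma four_eq_zero_of_algebra [Algebra (ZMod 4) R] : (4 : R) = 0 := by
  rw [← map_ofNat (algebraMap (ZMod 4) R) 4, show (4 : ZMod 4) = 0 from rfl, map_zero]

lemma mk_eq_zero_of_two_mul_eq_zero [Algebra (ZMod 4) R] [Module.Free (ZMod 4) R] {r : R}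
    (h : 2 * r = 0) : μ r = 0 := by
  let b := Module.Free.chooseBasis (ZMod 4) R
  have two_smul_eq (x : R) : (2 : ZMod 4) • x = 2 * x := by rw [Algebra.smul_def, map_ofNat]
  have hcoeff (i) : 2 * b.repr r i = 0 := by
    simpa using congrArg (fun x => b.repr x i) ((two_smul_eq r).trans h)
  -- every coordinate of `r` lies in `{0, 2}`, so it can be halved
  let half : ZMod 4 → ZMod 4 := fun a => if a = 2 then 1 else 0
  have hhalf : ∀ a : ZMod 4, 2 * a = 0 → 2 * half a = a := by decide
  have hr : r = 2 * b.repr.symm ((b.repr r).mapRange half (by decide)) := by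
    rw [← two_smul_eq, ← map_smul]
    conv_lhs => rw [← b.repr.symm_apply_apply r]
    congr 1
    ext i
    rw [Finsupp.smul_apply, Finsupp.mapRange_apply, smul_eq_mul, hhalf _ (hcoeff i)]
  rw [hr, map_mul, mk_two, zero_mul]

lemma add_two_mul_sq (h4 : (4 : R) = 0) (r s : R) : (r + 2 * s) ^ 2 = r ^ 2 := by
  linear_combination (r * s + s ^ 2) * h4

lemma add_two_mul_pow_two_pow (h4 : (4 : R) = 0) (k : ℕ) (r s : R) :
    (r + 2 * s) ^ 2 ^ (k + 1) = r ^ 2 ^ (k + 1) := by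
  rw [pow_succ', pow_mul, pow_mul, add_two_mul_sq h4]

lemma add_pow_two_pow (h4 : (4 : R) = 0) (k : ℕ) (X Y : R) :
    (X + Y) ^ 2 ^ (k + 1) = X ^ 2 ^ (k + 1) + Y ^ 2 ^ (k + 1) + 2 * (X * Y) ^ 2 ^ k := by
  induction k with
  | zero => ring
  | succ k ih =>
    rw [pow_succ 2 (k + 1), pow_mul, ih, add_two_mul_sq h4, pow_mul, pow_mul, mul_pow]
    ring

lemma eq_of_mk_eq_of_pow_two_pow_eq_self (h4 : (4 : R) = 0) (hm : 0 < m) {X Y : R}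
    (hX : X ^ 2 ^ m = X) (hY : Y ^ 2 ^ m = Y) (h : μ X = μ Y) : X = Y := by
  obtain ⟨k, rfl⟩ := Nat.exists_eq_add_one_of_ne_zero hm.ne'
  obtain ⟨s, hs⟩ := exists_eq_two_mul_of_mk_eq_zero (by rw [map_sub, h, sub_self] : μ (X - Y) = 0)
  rw [← hX, ← hY, show X = Y + 2 * s by linear_combination hs, add_two_mul_pow_two_pow h4]

lemma exists_pow_two_pow_eq_self_mk_eq (h4 : (4 : R) = 0) (hm : 0 < m)
    (hpow : ∀ a : 𝔽, a ^ 2 ^ m = a) (a : 𝔽) : ∃ X : R, X ^ 2 ^ m = X ∧ μ X = a := by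
  obtain ⟨k, rfl⟩ := Nat.exists_eq_add_one_of_ne_zero hm.ne'
  obtain ⟨r, rfl⟩ := Ideal.Quotient.mk_surjective a
  obtain ⟨s, hs⟩ := exists_eq_two_mul_of_mk_eq_zero
    (by rw [map_sub, map_pow, hpow, sub_self] : μ (r ^ 2 ^ (k + 1) - r) = 0)
  refine ⟨r ^ 2 ^ (k + 1), ?_, by rw [map_pow, hpow]⟩
  have hr : r ^ 2 ^ (k + 1) = r + 2 * s := by linear_combination hs
  rw [hr, add_two_mul_pow_two_pow h4, hr]

lemma mk_sq_eq_of_add_eq_add_add_two_mul [Algebra (ZMod 4) R] [Module.Free (ZMod 4) R]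
    (hm : 0 < m) {X Y Z W S : R} (hX : X ^ 2 ^ m = X) (hY : Y ^ 2 ^ m = Y) (hZ : Z ^ 2 ^ m = Z)
    (hW : W ^ 2 ^ m = W) (h : X + Y = W + Z + 2 * S) :
    μ S ^ 2 = μ X * μ Y - μ W * μ Z := by
  obtain ⟨k, rfl⟩ := Nat.exists_eq_add_one_of_ne_zero hm.ne'
  have h4 : (4 : R) = 0 := four_eq_zero_of_algebra
  have hXY : (X + Y) ^ 2 ^ (k + 1) = X + Y + 2 * (X * Y) ^ 2 ^ k := by
    rw [add_pow_two_pow h4, hX, hY]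
  have hWZ : (W + Z + 2 * S) ^ 2 ^ (k + 1) = W + Z + 2 * (W * Z) ^ 2 ^ k := by
    rw [add_two_mul_pow_two_pow h4, add_pow_two_pow h4, hW, hZ]
  rw [h, hWZ] at hXY
  have hcarry := mk_eq_zero_of_two_mul_eq_zero
    (show 2 * (S + (X * Y) ^ 2 ^ k - (W * Z) ^ 2 ^ k) = 0 by linear_combination -hXY)
  simp only [map_sub, map_add, map_pow, map_mul] at hcarry
  have mk_pow {A : R} (hA : A ^ 2 ^ (k + 1) = A) : μ A ^ 2 ^ (k + 1) = μ A := by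
    rw [← map_pow, hA]
  set P := (μ X * μ Y) ^ 2 ^ k
  set Q := (μ W * μ Z) ^ 2 ^ k
  have hP : P ^ 2 = μ X * μ Y := by rw [← pow_mul, ← pow_succ, mul_pow, mk_pow hX, mk_pow hY]
  have hQ : Q ^ 2 = μ W * μ Z := by rw [← pow_mul, ← pow_succ, mul_pow, mk_pow hW, mk_pow hZ]
  linear_combination (μ S - P + Q) * hcarry + hP - hQ + Q * (Q - P) * two_eq_zero_quotient (R := R)

lemma add_sub_eq_add_two_iff [Algebra (ZMod 4) R] [Module.Free (ZMod 4) R] (hm : 0 < m)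
    (hpow : ∀ a : 𝔽, a ^ 2 ^ m = a) {X Y Z W : R}
    (hX : X ^ 2 ^ m = X) (hY : Y ^ 2 ^ m = Y) (hZ : Z ^ 2 ^ m = Z) (hW : W ^ 2 ^ m = W) :
    X + Y - Z = W + 2 ↔ μ X + μ Y - μ Z = μ W ∧ μ X * μ Y - μ W * μ Z = 1 := by
  constructor
  · intro h
    refine ⟨by simpa [mk_two] using congrArg μ h, ?_⟩
    rw [← mk_sq_eq_of_add_eq_add_add_two_mul hm hX hY hZ hW (S := 1) (by linear_combination h),
      map_one, one_pow]
  · rintro ⟨h₁, h₂⟩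
    obtain ⟨S, hS⟩ := exists_eq_two_mul_of_mk_eq_zero (show μ (X + Y - Z - W) = 0 by simp [← h₁])
    have hS1 : μ S = 1 := by
      obtain ⟨k, rfl⟩ := Nat.exists_eq_add_one_of_ne_zero hm.ne'
      rw [← hpow (μ S), pow_succ', pow_mul,
        mk_sq_eq_of_add_eq_add_add_two_mul hm hX hY hZ hW (by linear_combination hS), h₂, one_pow]
    obtain ⟨T, hT⟩ := exists_eq_two_mul_of_mk_eq_zero (show μ (S - 1) = 0 by simp [hS1])
    linear_combination hS + 2 * hT + T * four_eq_zero_of_algebra (R := R)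

lemma card_teichmuller_triples (h4 : (4 : R) = 0) (hm : 0 < m) (hpow : ∀ a : 𝔽, a ^ 2 ^ m = a)
    (P : 𝔽 → 𝔽 → 𝔽 → Prop) :
    Nat.card {t : R × R × R // (t.1 ^ 2 ^ m = t.1 ∧ t.2.1 ^ 2 ^ m = t.2.1 ∧ t.2.2 ^ 2 ^ m = t.2.2) ∧
        P (μ t.1) (μ t.2.1) (μ t.2.2)} = Nat.card {s : 𝔽 × 𝔽 × 𝔽 // P s.1 s.2.1 s.2.2} := by
  refine Nat.card_eq_of_bijective (fun t => ⟨(μ t.1.1, μ t.1.2.1, μ t.1.2.2), t.2.2⟩) ⟨?_, ?_⟩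
  · rintro ⟨⟨X, Y, Z⟩, ⟨hX, hY, hZ⟩, _⟩ ⟨⟨X', Y', Z'⟩, ⟨hX', hY', hZ'⟩, _⟩ h
    simp only [Subtype.mk.injEq, Prod.mk.injEq] at h ⊢
    obtain ⟨h₁, h₂, h₃⟩ := h
    exact ⟨eq_of_mk_eq_of_pow_two_pow_eq_self h4 hm hX hX' h₁,
      eq_of_mk_eq_of_pow_two_pow_eq_self h4 hm hY hY' h₂,
      eq_of_mk_eq_of_pow_two_pow_eq_self h4 hm hZ hZ' h₃⟩
  · rintro ⟨⟨x, y, z⟩, hP⟩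
    obtain ⟨X, hX, rfl⟩ := exists_pow_two_pow_eq_self_mk_eq h4 hm hpow x
    obtain ⟨Y, hY, rfl⟩ := exists_pow_two_pow_eq_self_mk_eq h4 hm hpow y
    obtain ⟨Z, hZ, rfl⟩ := exists_pow_two_pow_eq_self_mk_eq h4 hm hpow z
    exact ⟨⟨(X, Y, Z), ⟨hX, hY, hZ⟩, hP⟩, rfl⟩

lemma card_teichmuller_solutions [Algebra (ZMod 4) R] [Module.Free (ZMod 4) R]
    [(Ideal.span {(2 : R)}).IsMaximal] (hm : 0 < m) (hpow : ∀ a : 𝔽, a ^ 2 ^ m = a) {W : R}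
    (hW : W ^ 2 ^ m = W) (d : 𝔽) :
    Nat.card {t : R × R × R // (t.1 ^ 2 ^ m = t.1 ∧ t.2.1 ^ 2 ^ m = t.2.1 ∧ t.2.2 ^ 2 ^ m = t.2.2) ∧
        t.1 + t.2.1 - t.2.2 = W + 2 ∧ μ t.1 ^ 3 + μ t.2.1 ^ 3 + μ t.2.2 ^ 3 = μ W ^ 3 + d} =
      Nat.card {u : 𝔽 // u ^ 2 + d * u + 1 = 0} := by
  let := Ideal.Quotient.field (Ideal.span {(2 : R)})
  have : CharP 𝔽 2 := CharTwo.of_one_ne_zero_of_two_eq_zero one_ne_zero two_eq_zero_quotient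
  refine ((Nat.card_congr ?_).trans (card_teichmuller_triples four_eq_zero_of_algebra hm hpow
      fun x y z => (x + y - z = μ W ∧ x * y - μ W * z = 1) ∧
        x ^ 3 + y ^ 3 + z ^ 3 = μ W ^ 3 + d)).trans
    (card_cubic_system_eq_card_quadratic_roots (μ W) d)
  exact Equiv.subtypeEquivRight fun t => and_congr_right fun hT =>
    and_congr_left fun _ => add_sub_eq_add_two_iff hm hpow hT.1 hT.2.1 hT.2.2 hW

end Teichmuller

noncomputable def AdjoinRoot.quotMapKerEquiv {R S : Type*} [CommRing R] [CommRing S]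
    {φ : R →+* S} (hφ : Function.Surjective φ) (f : R[X]) :
    (AdjoinRoot f ⧸ (RingHom.ker φ).map (of f)) ≃+* AdjoinRoot (f.map φ) :=
  (quotEquivQuotMap f (RingHom.ker φ)).toRingEquiv.trans
    (mapRingEquiv (RingHom.quotientKerEquivOfSurjective hφ) _ _ (by rw [Polynomial.map_map]; rfl))

section ResField

lemma ZMod.ker_castHom_four_two :
    RingHom.ker (ZMod.castHom (show 2 ∣ 4 by norm_num) (ZMod 2)) = Ideal.span {2} := by
  ext a
  simp only [RingHom.mem_ker, Ideal.mem_span_singleton]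
  revert a
  decide

noncomputable def resFieldEquiv (f : (ZMod 4)[X]) :
    ResField f ≃+* AdjoinRoot (f.map (ZMod.castHom (show 2 ∣ 4 by norm_num) (ZMod 2))) :=
  (Ideal.quotEquivOfEq (by
    rw [ZMod.ker_castHom_four_two, Ideal.map_span, Set.image_singleton, map_ofNat])).trans
    (AdjoinRoot.quotMapKerEquiv (ZMod.castHom_surjective _) f)

variable {f : (ZMod 4)[X]}

lemma isMaximal_span_two_of_irreducible
    (hirr : Irreducible (f.map (ZMod.castHom (show 2 ∣ 4 by norm_num) (ZMod 2)))) :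
    (Ideal.span {2} : Ideal (AdjoinRoot f)).IsMaximal := by
  have := Fact.mk hirr
  exact Ideal.Quotient.maximal_of_isField _
    ((resFieldEquiv f).toMulEquiv.isField (Field.toIsField _))

lemma natCard_resField (hirr : Irreducible (f.map (ZMod.castHom (show 2 ∣ 4 by norm_num) (ZMod 2))))
    (hmonic : f.Monic) : Nat.card (ResField f) = 2 ^ f.natDegree := by
  have := Fact.mk hirr
  let pb := AdjoinRoot.powerBasis hirr.ne_zero
  have := pb.finite
  rw [Nat.card_congr (resFieldEquiv f).toEquiv, Module.natCard_eq_pow_finrank (K := ZMod 2),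
    Nat.card_zmod, pb.finrank, AdjoinRoot.powerBasis_dim, hmonic.natDegree_map]

end ResField

/-- Let `m` be odd, `R = GR(4,m)`, `𝒯` its Teichmüller set,
`μ : R → 𝔽_q` reduction mod 2.  For `W ∈ 𝒯` and `d ∈ 𝔽_q`, the number of triples
`(X,Y,Z) ∈ 𝒯³` with `X + Y - Z = W + 2` in `R` and `x³ + y³ + z³ = w³ + d` in `𝔽_q`
equals `1` if `d = 0`, `2` if `d ∈ M₁`, and `0` if `d ∈ M₀ ∪ M₃`. -/
theorem statement12 (m : ℕ) (hm : Odd m) (hmpos : 0 < m)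
    (f : Polynomial (ZMod 4)) (hmonic : f.Monic) (hdeg : f.natDegree = m)
    (hirr : Irreducible (f.map (ZMod.castHom (show (2:ℕ) ∣ 4 by norm_num) (ZMod 2))))
    (W : AdjoinRoot f) (hW : W ^ 2 ^ m = W) (d : ResField f) :
    (d = 0 →
      Nat.card {t : AdjoinRoot f × AdjoinRoot f × AdjoinRoot f //
        (t.1 ^ 2 ^ m = t.1 ∧ t.2.1 ^ 2 ^ m = t.2.1 ∧ t.2.2 ^ 2 ^ m = t.2.2) ∧
        t.1 + t.2.1 - t.2.2 = W + 2 ∧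
        muRed f t.1 ^ 3 + muRed f t.2.1 ^ 3 + muRed f t.2.2 ^ 3 = muRed f W ^ 3 + d} = 1) ∧
    (d ≠ 0 → cubicRoots f d = 1 →
      Nat.card {t : AdjoinRoot f × AdjoinRoot f × AdjoinRoot f //
        (t.1 ^ 2 ^ m = t.1 ∧ t.2.1 ^ 2 ^ m = t.2.1 ∧ t.2.2 ^ 2 ^ m = t.2.2) ∧
        t.1 + t.2.1 - t.2.2 = W + 2 ∧
        muRed f t.1 ^ 3 + muRed f t.2.1 ^ 3 + muRed f t.2.2 ^ 3 = muRed f W ^ 3 + d} = 2) ∧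
    (d ≠ 0 → (cubicRoots f d = 0 ∨ cubicRoots f d = 3) →
      Nat.card {t : AdjoinRoot f × AdjoinRoot f × AdjoinRoot f //
        (t.1 ^ 2 ^ m = t.1 ∧ t.2.1 ^ 2 ^ m = t.2.1 ∧ t.2.2 ^ 2 ^ m = t.2.2) ∧
        t.1 + t.2.1 - t.2.2 = W + 2 ∧
        muRed f t.1 ^ 3 + muRed f t.2.1 ^ 3 + muRed f t.2.2 ^ 3 = muRed f W ^ 3 + d} = 0) := by
  have := isMaximal_span_two_of_irreducible hirr
  let := Ideal.Quotient.field (Ideal.span {(2 : AdjoinRoot f)})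
  have : CharP (ResField f) 2 :=
    CharTwo.of_one_ne_zero_of_two_eq_zero one_ne_zero two_eq_zero_quotient
  have : Module.Free (ZMod 4) (AdjoinRoot f) := .of_basis (AdjoinRoot.powerBasis' hmonic).basis
  have hcard : Nat.card (ResField f) = 2 ^ m := hdeg ▸ natCard_resField hirr hmonic
  have : Finite (ResField f) := Nat.finite_of_card_ne_zero (by simp [hcard])
  have hpow (a : ResField f) : a ^ 2 ^ m = a := by
    have := Fintype.ofFinite (ResField f)
    rw [← hcard, Nat.card_eq_fintype_card, FiniteField.pow_card]
  simp only [muRed, card_teichmuller_solutions hmpos hpow hW d]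
  refine ⟨fun hd => ?_, fun hd hN => ?_, fun hd hN => ?_⟩
  · subst hd
    simpa using card_quadratic_roots_of_eq_zero
  · obtain ⟨u, hu⟩ := (exists_quadratic_root_iff_card_cubic_roots_eq_one hcard hm hd).mpr hN
    exact card_quadratic_roots_of_ne_zero hd hu
  · rw [cubicRoots] at hN
    have : IsEmpty {u : ResField f // u ^ 2 + d * u + 1 = 0} := ⟨fun u => by
      have := (exists_quadratic_root_iff_card_cubic_roots_eq_one hcard hm hd).mp ⟨u.1, u.2⟩
      omega⟩
    exact Nat.card_of_isEmpty
end
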